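/- Independent swaps are collapsed syntactically: let π = α u v β and ρ = α v u β with u < v, and suppose some entry of β lies strictly between u and v (Tonks-independence). Then h(w(π)) =_I h(w(ρ)); consequently ε(h(w(π))) = ε(h(w(ρ))). -/

import Mathlib

/-- Indexed terms of the language `L^I`: generators `2^k` and partial compositions. -/
inductive Trm : Type
  | gen : ℕ → Trm
  | comp : Trm → ℕ → Trm → Trm
deriving DecidableEq

namespace Trm

/-- Arity `|A|`. -/
def arity : Trm → ℕ
  | gen _ => 2
  | comp A _ B => A.arity + B.arity - 1

/-- Set of indices occurring in a term. -/
def ind : Trm → Finset ℕ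
  | gen k => {k}
  | comp A _ B => A.ind ∪ B.ind

/-- Root index. -/
def root : Trm → ℕ
  | gen k => k
  | comp A _ _ => A.root

/-- Number of occurrences of the generator. -/
def countGen : Trm → ℕ
  | gen _ => 1
  | comp A _ B => A.countGen + B.countGen

end Trm

/-- The congruence `=_I` generated by (assoc1) and (assoc2). -/
inductive IEq : Trm → Trm → Prop
  | refl (A : Trm) : IEq A A
  | symm {A B} : IEq A B → IEq B A
  | trans {A B C} : IEq A B → IEq B C → IEq A C
  | congr {A A' B B'} (n : ℕ) : IEq A A' → IEq B B' →
      IEq (Trm.comp A n B) (Trm.comp A' n B')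
  | assoc1 (A B C : Trm) (n m : ℕ) : n ≤ m → m < n + B.arity →
      IEq (Trm.comp (Trm.comp A n B) m C) (Trm.comp A n (Trm.comp B (m - n + 1) C))
  | assoc2 (A B C : Trm) (n m : ℕ) : n + B.arity ≤ m →
      IEq (Trm.comp (Trm.comp A n B) m C) (Trm.comp (Trm.comp A (m - B.arity + 1) C) n B)

/-- Planar binary trees. -/
inductive BT : Type
  | leaf : BT
  | node : BT → BT → BT
deriving DecidableEq

namespace BT

/-- Number of leaves. -/
def leaves : BT → ℕ
  | leaf => 1
  | node l r => l.leaves + r.leaves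

/-- Graft `S` at the `i`-th leaf (1-indexed) of a tree. -/
def graft : BT → ℕ → BT → BT
  | leaf, _, S => S
  | node l r, i, S =>
    if i ≤ l.leaves then node (l.graft i S) r else node l (r.graft (i - l.leaves) S)

end BT

/-- Evaluation `ε` of indexed terms to planar binary trees. -/
def Trm.eval : Trm → BT
  | Trm.gen _ => BT.node BT.leaf BT.leaf
  | Trm.comp A i B => A.eval.graft i B.eval

/-- `l`-factors. -/
inductive LFactor : Trm → Prop
  | gen (k : ℕ) : LFactor (Trm.gen k)
  | step {A : Trm} (j : ℕ) : LFactor A → j ∉ A.ind →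
      LFactor (Trm.comp A ((A.ind.filter (· < j)).card + 1) (Trm.gen j))

/-- Auxiliary for the head-insertion encoding: `done` is the list of already
inserted letters. -/
def hAux : Trm → List ℕ → List ℕ → Trm
  | A, _, [] => A
  | A, done, y :: rest =>
      hAux (Trm.comp A ((done.filter (· < y)).length + 1) (Trm.gen y)) (done ++ [y]) rest

/-- Head-insertion encoding `h` (junk value on the empty word). -/
def hWord : List ℕ → Trm
  | [] => Trm.gen 0
  | x :: rest => hAux (Trm.gen x) [x] rest

/-- `u_a(x)`: number of letters to the left of `x` in `a` that are greater than `x`. -/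
def uCount (a : List ℕ) (x : ℕ) : ℕ := ((a.takeWhile (· ≠ x)).filter (x < ·)).length

/-- Decreasing rearrangement of a word. -/
def sortDesc (a : List ℕ) : List ℕ := (a.mergeSort (· ≤ ·)).reverse

/-- Decreasing encoding `f` (junk value on the empty word). -/
def fWord (a : List ℕ) : Trm :=
  match sortDesc a with
  | [] => Trm.gen 0
  | k :: rest => rest.foldl (fun A x => Trm.comp A (uCount a x + 1) (Trm.gen x)) (Trm.gen k)

/-- Standardization of a word of distinct integers. -/
def std (a : List ℕ) : List ℕ := a.map (fun x => (a.filter (· ≤ x)).length)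

/-- Tonks' vertex map, splitting form `φ`. -/
def tonksPhi (a : List ℕ) : BT :=
  match ha : a.getLast? with
  | none => BT.leaf
  | some x =>
      BT.node (tonksPhi (std (a.filter (· < x)))) (tonksPhi (std (a.filter (x < ·))))
termination_by a.length
decreasing_by
  · have hx : x ∈ a := List.mem_of_mem_getLast? (Option.mem_def.mpr ha)
    have : (a.filter (· < x)).length < a.length := by
      apply List.length_filter_lt_length_iff_exists.2
      exact ⟨x, hx, by simp⟩
    simp only [std, List.length_map, List.length_unattach]
    rw [← List.length_attach (l := a)]
    apply List.length_filter_lt_length_iff_exists.2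
    exact ⟨⟨x, hx⟩, List.mem_attach _ _, by simp⟩
  · have hx : x ∈ a := List.mem_of_mem_getLast? (Option.mem_def.mpr ha)
    have : (a.filter (x < ·)).length < a.length := by
      apply List.length_filter_lt_length_iff_exists.2
      exact ⟨x, hx, by simp⟩
    simp only [std, List.length_map, List.length_unattach]
    rw [← List.length_attach (l := a)]
    apply List.length_filter_lt_length_iff_exists.2
    exact ⟨⟨x, hx⟩, List.mem_attach _ _, by simp⟩

/-- Tonks' vertex map, head-grafting form `φ̂`. -/
def phiHat : List ℕ → BT
  | [] => BT.leaf
  | x :: rest => (phiHat (std rest)).graft x (BT.node BT.leaf BT.leaf)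
termination_by a => a.length
decreasing_by
  simp [std]

/-- The Loday–Ronco map `ψ`. -/
def lodayPsi (a : List ℕ) : BT :=
  match hm : a.maximum with
  | none => BT.leaf
  | some m =>
      let i := a.idxOf m
      BT.node (lodayPsi (std (a.take i))) (lodayPsi (std (a.drop (i + 1))))
termination_by a.length
decreasing_by
  · have hmem : m ∈ a := List.maximum_mem hm
    have hi : a.idxOf m < a.length := List.idxOf_lt_length_of_mem hmem
    simp only [std, List.length_map, List.length_take]
    omega
  · have : a ≠ [] := by rintro rfl; simp [List.maximum] at hm
    have : 0 < a.length := List.length_pos_iff.2 this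
    simp only [std, List.length_map, List.length_drop]
    omega

/-- Inverse of a permutation word on `{1,…,n}`. -/
def invWord (π : List ℕ) : List ℕ :=
  (List.range π.length).map (fun j => π.idxOf (j + 1) + 1)

/-- One Tamari (right rotation) step, at any subtree. -/
inductive TamariStep : BT → BT → Prop
  | rot (X Y Z : BT) : TamariStep (BT.node (BT.node X Y) Z) (BT.node X (BT.node Y Z))
  | left {l l'} (r : BT) : TamariStep l l' → TamariStep (BT.node l r) (BT.node l' r)
  | right (l : BT) {r r'} : TamariStep r r' → TamariStep (BT.node l r) (BT.node l r')

/-- The Tamari order. -/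
def TamariLE : BT → BT → Prop := Relation.ReflTransGen TamariStep

/-- The strict Tamari order. -/
def TamariLT : BT → BT → Prop := Relation.TransGen TamariStep

/-- One cover of the right weak Bruhat order on words. -/
inductive BruhatStep : List ℕ → List ℕ → Prop
  | swap (α : List ℕ) {u v : ℕ} (β : List ℕ) : u < v →
      BruhatStep (α ++ u :: v :: β) (α ++ v :: u :: β)

/-- The right weak Bruhat order on words. -/
def BruhatLE : List ℕ → List ℕ → Prop := Relation.ReflTransGen BruhatStep

/-- Head-insertion index `k(a; σ)`. -/
def kIdx (a : ℕ) (σ : List ℕ) : ℕ := 1 + (σ.filter (· < a)).length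

/-!
Read backwards, `π = α u v β` and `ρ = α v u β` both start with the reversed tail `β`, after
which `h` inserts `v` and `u` in one order or the other. An entry of `β` strictly between `u`
and `v` puts the insertion position of `u` strictly left of that of `v`, so the two partial
compositions act on disjoint leaves and commute by (assoc2), both in `=_I` and after `ε`.
The remaining letters of `α` are inserted at positions that depend only on the set of letters
already inserted, which is the same for both words.
-/

namespace BT

lemma one_le_leaves : ∀ T : BT, 1 ≤ T.leaves
  | leaf => le_rfl
  | node l _ => by
      have := one_le_leaves l
      simp only [leaves]; omega

lemma leaves_graft : ∀ (T : BT) (i : ℕ) (S : BT),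
    (T.graft i S).leaves = T.leaves + S.leaves - 1
  | leaf, i, S => by simp [graft, leaves]
  | node l r, i, S => by
      have := one_le_leaves l
      have := one_le_leaves r
      have := one_le_leaves S
      by_cases h : i ≤ l.leaves <;>
        simp only [graft, h, if_true, if_false, leaves, leaves_graft] <;> omega

lemma graft_graft_comm (S R : BT) : ∀ (T : BT) (n m : ℕ), 1 ≤ n → n + S.leaves ≤ m →
    m ≤ T.leaves + S.leaves - 1 →
    (T.graft n S).graft m R = (T.graft (m - S.leaves + 1) R).graft n S
  | leaf, n, m, hn, h1, h2 => by
      have := one_le_leaves S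
      simp only [leaves] at h2
      omega
  | node l r, n, m, hn, h1, h2 => by
      have := one_le_leaves l
      have := one_le_leaves S
      have := one_le_leaves R
      simp only [leaves] at h2
      by_cases hnl : n ≤ l.leaves
      · by_cases hml : m ≤ l.leaves + S.leaves - 1
        · have c1 : m - S.leaves + 1 ≤ l.leaves := by omega
          have c2 : n ≤ l.leaves + R.leaves - 1 := by omega
          simp only [graft, if_pos hnl, leaves_graft, if_pos hml, if_pos c1, if_pos c2,
            graft_graft_comm S R l n m hn h1 hml]
        · have c1 : ¬ m - S.leaves + 1 ≤ l.leaves := by omega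
          have e : m - (l.leaves + S.leaves - 1) = m - S.leaves + 1 - l.leaves := by omega
          simp only [graft, if_pos hnl, leaves_graft, if_neg hml, if_neg c1, e]
      · have c0 : ¬ m ≤ l.leaves := by omega
        have c1 : ¬ m - S.leaves + 1 ≤ l.leaves := by omega
        have e : m - l.leaves - S.leaves + 1 = m - S.leaves + 1 - l.leaves := by omega
        simp only [graft, if_neg hnl, if_neg c0, if_neg c1]
        rw [graft_graft_comm S R r (n - l.leaves) (m - l.leaves) (by omega) (by omega)
          (by omega), e]

end BT

namespace Trm

lemma ieq_comp_gen_comm (A : Trm) {j k : ℕ} (hjk : j < k) (x y : ℕ) :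
    IEq (comp (comp A (k + 1) (gen y)) (j + 1) (gen x))
      (comp (comp A (j + 1) (gen x)) (k + 2) (gen y)) :=
  (IEq.assoc2 A (gen x) (gen y) (j + 1) (k + 2) (by simp only [arity]; omega)).symm

lemma eval_comp_gen_comm (A : Trm) {j k : ℕ} (hjk : j < k) (hk : k < A.eval.leaves)
    (x y : ℕ) :
    (comp (comp A (k + 1) (gen y)) (j + 1) (gen x)).eval =
      (comp (comp A (j + 1) (gen x)) (k + 2) (gen y)).eval := by
  have h := BT.graft_graft_comm (gen x).eval (gen y).eval A.eval (j + 1) (k + 2) (by omega)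
    (by simp only [eval, BT.leaves]; omega) (by simp only [eval, BT.leaves]; omega)
  simp only [eval, BT.leaves] at h ⊢
  exact h.symm

end Trm

lemma hAux_append (A : Trm) (done l₁ l₂ : List ℕ) :
    hAux A done (l₁ ++ l₂) = hAux (hAux A done l₁) (done ++ l₁) l₂ := by
  induction l₁ generalizing A done with
  | nil => simp [hAux]
  | cons y l₁ ih => simp [hAux, ih]

lemma hWord_cons_append (b : ℕ) (γ w : List ℕ) :
    hWord (b :: γ ++ w) = hAux (hWord (b :: γ)) (b :: γ) w := by
  simp only [List.cons_append, hWord, hAux_append, List.nil_append]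

lemma leaves_eval_hAux (A : Trm) (done rest : List ℕ) :
    (hAux A done rest).eval.leaves = A.eval.leaves + rest.length := by
  induction rest generalizing A done with
  | nil => simp [hAux]
  | cons y rest ih =>
      have := BT.one_le_leaves A.eval
      simp only [hAux, ih, Trm.eval, BT.leaves_graft, BT.leaves, List.length_cons]
      omega

lemma leaves_eval_hWord_cons (b : ℕ) (γ : List ℕ) :
    (hWord (b :: γ)).eval.leaves = (b :: γ).length + 1 := by
  simp only [hWord, leaves_eval_hAux, Trm.eval, BT.leaves, List.length_cons]
  omega

lemma hAux_rel {R : Trm → Trm → Prop}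
    (hR : ∀ {A A'} (n k : ℕ), R A A' →
      R (Trm.comp A n (Trm.gen k)) (Trm.comp A' n (Trm.gen k)))
    (rest : List ℕ) {A A' : Trm} {done done' : List ℕ} (hd : done.Perm done') (hA : R A A') :
    R (hAux A done rest) (hAux A' done' rest) := by
  induction rest generalizing A A' done done' with
  | nil => exact hA
  | cons y rest ih =>
      rw [hAux, hAux, (hd.filter _).length_eq]
      exact ih (hd.append_right [y]) (hR _ _ hA)

lemma length_filter_lt_lt_of_mem_between {done : List ℕ} {u v x : ℕ} (hx : x ∈ done)
    (hux : u < x) (hxv : x < v) :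
    (done.filter (· < u)).length < (done.filter (· < v)).length := by
  have huv := hux.trans hxv
  have hsub : done.filter (· < u) = (done.filter (· < v)).filter (· < u) := by
    rw [List.filter_filter]
    exact List.filter_congr fun y _ => by
      by_cases hy : y < u
      · simp [hy, hy.trans huv]
      · simp [hy]
  rw [hsub, List.length_filter_lt_length_iff_exists]
  exact ⟨x, List.mem_filter.2 ⟨hx, by simpa using hxv⟩, by simpa using hux.le⟩

lemma hAux_swap_of_mem_between (A : Trm) {done : List ℕ} (hA : A.eval.leaves = done.length + 1)
    {u v x : ℕ} (hx : x ∈ done) (hux : u < x) (hxv : x < v) (rest : List ℕ) :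
    IEq (hAux A done (v :: u :: rest)) (hAux A done (u :: v :: rest)) ∧
      (hAux A done (v :: u :: rest)).eval = (hAux A done (u :: v :: rest)).eval := by
  have huv := hux.trans hxv
  have hcount := length_filter_lt_lt_of_mem_between hx hux hxv
  have hcv : (done.filter (· < v)).length < A.eval.leaves :=
    hA ▸ Nat.lt_succ_of_le (List.length_filter_le _ _)
  have hvu : ((done ++ [v]).filter (· < u)).length = (done.filter (· < u)).length := by
    simp [List.filter_append, huv.not_gt]
  have huv' : ((done ++ [u]).filter (· < v)).length = (done.filter (· < v)).length + 1 := by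
    simp [List.filter_append, huv]
  have hperm : (done ++ [v] ++ [u]).Perm (done ++ [u] ++ [v]) := by
    simpa using (List.Perm.swap u v []).append_left done
  simp only [hAux, hvu, huv']
  exact ⟨hAux_rel (fun n k h => IEq.congr n h (IEq.refl _)) rest hperm
      (Trm.ieq_comp_gen_comm A hcount u v),
    hAux_rel (R := fun A B => A.eval = B.eval) (fun n k h => by simp only [Trm.eval, h]) rest
      hperm (Trm.eval_comp_gen_comm A hcount hcv u v)⟩

theorem independent_swap_collapse_general (α β : List ℕ) (u v : ℕ)
    (hindep : ∃ x ∈ β, u < x ∧ x < v) :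
    IEq (hWord (α ++ u :: v :: β).reverse) (hWord (α ++ v :: u :: β).reverse) ∧
    (hWord (α ++ u :: v :: β).reverse).eval = (hWord (α ++ v :: u :: β).reverse).eval := by
  obtain ⟨x, hxβ, hux, hxv⟩ := hindep
  obtain ⟨b, γ, hbγ⟩ :=
    List.exists_cons_of_ne_nil (List.reverse_ne_nil_iff.2 (List.ne_nil_of_mem hxβ))
  have hrev : ∀ y z, (α ++ y :: z :: β).reverse = b :: γ ++ z :: y :: α.reverse := by
    intro y z; simp [← hbγ]
  rw [hrev, hrev, hWord_cons_append, hWord_cons_append]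
  exact hAux_swap_of_mem_between _ (leaves_eval_hWord_cons b γ)
    (hbγ ▸ List.mem_reverse.2 hxβ) hux hxv _

theorem independent_swap_collapse (α β : List ℕ) (u v : ℕ) (huv : u < v)
    (hnd : (α ++ u :: v :: β).Nodup) (hpos : ∀ x ∈ α ++ u :: v :: β, 0 < x)
    (hindep : ∃ x ∈ β, u < x ∧ x < v) :
    IEq (hWord (α ++ u :: v :: β).reverse) (hWord (α ++ v :: u :: β).reverse) ∧
    (hWord (α ++ u :: v :: β).reverse).eval = (hWord (α ++ v :: u :: β).reverse).eval :=
  independent_swap_collapse_general α β u v hindep
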